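/- The natural map of R-modules R_f/R → R̂_f/R̂ (from the quotient of R_f by the image of R to the quotient of R̂_f by the image of R̂, induced by the canonical ring map R_f → R̂_f) is an isomorphism. -/

import Mathlib

noncomputable section

variable (R : Type*) [CommRing R] (f : R)

/-- The `(f)`-adic completion `R̂` of `R`. -/
abbrev Rhat : Type _ := AdicCompletion (Ideal.span {f}) R

/-- The localization `R_f = R[f⁻¹]`. -/
abbrev Rf : Type _ := Localization.Away f

/-- The localization `R̂_f = R̂[ι(f)⁻¹]`. -/
abbrev Rhatf : Type _ := Localization.Away (algebraMap R (Rhat R f) f)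

/-- The canonical ring map `R_f → R̂_f` extending `ι : R → R̂`. -/
noncomputable def psi : Rf R f →+* Rhatf R f :=
  Localization.awayMap (algebraMap R (Rhat R f)) f

/-! Every `b ∈ R̂` splits as `b = ι r + ι(f)ⁿ c` for each `n`, since the kernel of `R̂ → R/fⁿ` is
`fⁿ R̂` (the ideal `(f)` being finitely generated); this gives surjectivity, as
`θ b / ι(f)ⁿ = ψ (r / fⁿ) + θ c`. Conversely, reducing mod `fⁿ` shows that `ι r ∈ ι(f)ⁿ R̂` forces
`fⁿ ∣ r`. Combining the two facts, `ι f` is a nonzerodivisor of `R̂`, so `θ : R̂ → R̂_f` is injective,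
and an equation `ψ (a / fⁿ) = θ b` descends to `ι a = ι(f)ⁿ b`, whence `a / fⁿ ∈ R`. -/

theorem psi_algebraMap (a : R) :
    psi R f (algebraMap R (Rf R f) a) =
      algebraMap (Rhat R f) (Rhatf R f) (algebraMap R (Rhat R f) a) := by
  unfold psi Localization.awayMap IsLocalization.Away.map
  exact IsLocalization.map_eq _ _

section

variable {R f}

namespace AdicCompletion

theorem exists_eq_algebraMap_add_pow_mul (b : Rhat R f) (n : ℕ) :
    ∃ (r : R) (c : Rhat R f), b = algebraMap R _ r + algebraMap R _ f ^ n * c := by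
  obtain ⟨r, hr⟩ := Submodule.Quotient.mk_surjective _ (eval _ R n b)
  have hmem : b - algebraMap R _ r ∈ Ideal.span {f} ^ n • (⊤ : Submodule R (Rhat R f)) := by
    rw [pow_smul_top_eq_ker_eval (Submodule.fg_span_singleton f), LinearMap.mem_ker, map_sub,
      algebraMap_apply, eval_of, ← hr]
    simp
  rw [Ideal.span_singleton_pow, Submodule.ideal_span_singleton_smul,
    Submodule.mem_smul_pointwise_iff_exists] at hmem
  obtain ⟨c, -, hc⟩ := hmem
  exact ⟨r, c, by rw [← map_pow, ← Algebra.smul_def, hc, add_sub_cancel]⟩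

theorem evalₐ_algebraMap_pow_mul (n : ℕ) (c : Rhat R f) :
    evalₐ (Ideal.span {f}) n (algebraMap R _ f ^ n * c) = 0 := by
  rw [map_mul, map_pow, AlgHom.commutes, ← map_pow, Ideal.Quotient.algebraMap_eq,
    Ideal.Quotient.eq_zero_iff_mem.mpr (Ideal.pow_mem_pow (Ideal.mem_span_singleton_self f) n),
    zero_mul]

theorem pow_dvd_of_algebraMap_eq_pow_mul {n : ℕ} {r : R} {c : Rhat R f}
    (h : algebraMap R _ r = algebraMap R _ f ^ n * c) : f ^ n ∣ r := by
  have hr := congrArg (evalₐ (Ideal.span {f}) n) h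
  rw [evalₐ_algebraMap_pow_mul, AlgHom.commutes, Ideal.Quotient.algebraMap_eq,
    Ideal.Quotient.eq_zero_iff_mem, Ideal.span_singleton_pow] at hr
  exact Ideal.mem_span_singleton.mp hr

theorem algebraMap_mem_nonZeroDivisors (hf : f ∈ nonZeroDivisors R) :
    algebraMap R (Rhat R f) f ∈ nonZeroDivisors (Rhat R f) := by
  refine mem_nonZeroDivisors_iff_right.mpr fun c hc ↦ ext_evalₐ fun n ↦ ?_
  obtain ⟨r, d, rfl⟩ := exists_eq_algebraMap_add_pow_mul c n
  have hrf : algebraMap R (Rhat R f) (r * f) = algebraMap R _ f ^ (n + 1) * -d := by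
    rw [map_mul]
    linear_combination hc
  obtain ⟨t, ht⟩ := pow_dvd_of_algebraMap_eq_pow_mul hrf
  have hr : r = f ^ n * t := sub_eq_zero.mp <|
    mem_nonZeroDivisors_iff_right.mp hf (r - f ^ n * t) (by linear_combination ht)
  rw [hr, map_mul, map_pow, ← mul_add, evalₐ_algebraMap_pow_mul, _root_.map_zero]

end AdicCompletion

theorem algebraMap_rhatf_injective (hf : f ∈ nonZeroDivisors R) :
    Function.Injective (algebraMap (Rhat R f) (Rhatf R f)) :=
  IsLocalization.injective (M := Submonoid.powers (algebraMap R (Rhat R f) f)) (Rhatf R f)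
    (Submonoid.powers_le.mpr (AdicCompletion.algebraMap_mem_nonZeroDivisors hf))

theorem exists_algebraMap_eq_of_psi_eq_algebraMap (hf : f ∈ nonZeroDivisors R) {x : Rf R f}
    {b : Rhat R f} (h : psi R f x = algebraMap (Rhat R f) (Rhatf R f) b) :
    ∃ r : R, x = algebraMap R (Rf R f) r := by
  obtain ⟨n, a, hx⟩ := IsLocalization.Away.surj f x
  have ha : algebraMap R (Rhat R f) a = algebraMap R _ f ^ n * b := by
    apply algebraMap_rhatf_injective hf
    rw [← psi_algebraMap, ← hx, map_mul, map_mul, h, map_pow, map_pow, psi_algebraMap, mul_comm]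
  obtain ⟨u, rfl⟩ := AdicCompletion.pow_dvd_of_algebraMap_eq_pow_mul ha
  refine ⟨u, ((IsLocalization.Away.algebraMap_isUnit f).pow n).mul_right_cancel ?_⟩
  rw [hx, map_mul, map_pow, mul_comm]

theorem exists_psi_add_algebraMap_eq (y : Rhatf R f) :
    ∃ (x : Rf R f) (b : Rhat R f), y = psi R f x + algebraMap (Rhat R f) (Rhatf R f) b := by
  obtain ⟨n, b, hy⟩ := IsLocalization.Away.surj (algebraMap R (Rhat R f) f) y
  obtain ⟨r, c, rfl⟩ := AdicCompletion.exists_eq_algebraMap_add_pow_mul b n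
  let x : Rf R f := IsLocalization.mk' _ r (⟨f ^ n, n, rfl⟩ : Submonoid.powers f)
  have hx : psi R f x * algebraMap (Rhat R f) (Rhatf R f) (algebraMap R _ f) ^ n =
      algebraMap (Rhat R f) (Rhatf R f) (algebraMap R _ r) := by
    rw [← map_pow, ← map_pow, ← psi_algebraMap, ← map_mul, IsLocalization.mk'_spec, psi_algebraMap]
  refine ⟨x, c, ((IsLocalization.Away.algebraMap_isUnit (algebraMap R (Rhat R f) f)).pow n
    ).mul_right_cancel ?_⟩
  rw [hy, add_mul, hx, map_add, map_mul, map_pow]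
  ring

end

theorem stmt4 (hf : f ∈ nonZeroDivisors R) :
    (∀ x : Rf R f,
      (∃ b : Rhat R f, psi R f x = algebraMap (Rhat R f) (Rhatf R f) b) →
        ∃ r : R, x = algebraMap R (Rf R f) r) ∧
    (∀ y : Rhatf R f, ∃ (x : Rf R f) (b : Rhat R f),
      y = psi R f x + algebraMap (Rhat R f) (Rhatf R f) b) :=
  ⟨fun _ ⟨_, h⟩ ↦ exists_algebraMap_eq_of_psi_eq_algebraMap hf h,
    exists_psi_add_algebraMap_eq⟩
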